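/- arXiv:quant-ph/0702083 — 2 statements merged into one kernel-verified Lean document; each statement's English description precedes it below -/
import Mathlib

section
/- For a nonzero vector |ψ⟩ = Σ α_{k1...km} |k1⟩⊗...⊗|km⟩ in (ℂ^N)^{⊗m}, |ψ⟩ is fully separable (a tensor product of m vectors) if and only if for every j and all multi-indices k, l: α_{k1...km} α_{l1...lm} = α_{k1...k_{j-1} l_j k_{j+1}...km} α_{l1...l_{j-1} k_j l_{j+1}...lm}. -/
/-!
Products `∏ i, v i (k i)` satisfy the Segre relations because each relation only swaps the
`j`-th factors of two such products. Conversely, fix `k₀` with `α k₀ ≠ 0`; the relation for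
slot `j`, applied to a multi-index agreeing with `k₀` at `j` and to `update k₀ j x`, shows that
`α / α k₀` is multiplicative under changing one coordinate at a time. Changing all coordinates
of `k₀` into those of `k` gives `α k = α k₀ * ∏ j, α (update k₀ j (k j)) / α k₀`, and the
constant `α k₀` is absorbed into one factor.
-/

open Finset Function

variable {ι : Type*} [DecidableEq ι] {κ : ι → Type*} {R : Type*}

def SegreRelations [Mul R] (α : (∀ i, κ i) → R) : Prop :=
  ∀ (j : ι) (k l : ∀ i, κ i), α k * α l = α (update k j (l j)) * α (update l j (k j))

theorem segreRelations_prod [Fintype ι] [CommMonoid R] (v : ∀ i, κ i → R) :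
    SegreRelations fun k : ∀ i, κ i ↦ ∏ i, v i (k i) := by
  intro j k l
  simp only [← prod_mul_distrib]
  refine prod_congr rfl fun i _ ↦ ?_
  obtain rfl | hij := eq_or_ne i j
  · simp [mul_comm]
  · simp [update_of_ne hij]

namespace SegreRelations

variable [Field R] {α : (∀ i, κ i) → R} {k₀ : ∀ i, κ i}

theorem div_piecewise (hseg : SegreRelations α) (hk₀ : α k₀ ≠ 0) (k : ∀ i, κ i)
    (s : Finset ι) :
    α (s.piecewise k k₀) / α k₀ = ∏ j ∈ s, α (update k₀ j (k j)) / α k₀ := by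
  induction s using Finset.induction with
  | empty => simp [hk₀]
  | @insert j s hj ih =>
    have hrel := hseg j (s.piecewise k k₀) (update k₀ j (k j))
    rw [update_self, piecewise_eq_of_notMem _ _ _ hj, update_idem, update_eq_self,
      ← piecewise_insert] at hrel
    rw [prod_insert hj, ← ih]
    field_simp
    linear_combination -hrel

theorem eq_mul_prod_div [Fintype ι] (hseg : SegreRelations α) (hk₀ : α k₀ ≠ 0)
    (k : ∀ i, κ i) :
    α k = α k₀ * ∏ j, α (update k₀ j (k j)) / α k₀ := by
  rw [← hseg.div_piecewise hk₀ k univ, piecewise_univ, mul_div_cancel₀ _ hk₀]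

theorem exists_eq_prod [Fintype ι] [Nonempty ι] (hseg : SegreRelations α) (hα : α ≠ 0) :
    ∃ v : ∀ i, κ i → R, ∀ k, α k = ∏ i, v i (k i) := by
  obtain ⟨k₀, hk₀⟩ := Function.ne_iff.mp hα
  obtain ⟨i₀⟩ := ‹Nonempty ι›
  refine ⟨fun j x ↦ (if j = i₀ then α k₀ else 1) * (α (update k₀ j x) / α k₀), fun k ↦ ?_⟩
  rw [prod_mul_distrib, Fintype.prod_ite_eq', hseg.eq_mul_prod_div hk₀]

end SegreRelations

theorem multipartite_separable_iff_segre_general (N m : ℕ) (hm : 1 ≤ m)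
    (α : (Fin m → Fin N) → ℂ) (hα : α ≠ 0) :
    (∃ v : Fin m → Fin N → ℂ, ∀ k : Fin m → Fin N, α k = ∏ j, v j (k j)) ↔
      (∀ (j : Fin m) (k l : Fin m → Fin N),
        α k * α l =
          α (Function.update k j (l j)) * α (Function.update l j (k j))) := by
  have : Nonempty (Fin m) := ⟨⟨0, hm⟩⟩
  constructor
  · rintro ⟨v, hv⟩
    obtain rfl : α = fun k ↦ ∏ j, v j (k j) := funext hv
    exact segreRelations_prod v
  · exact fun hseg ↦ SegreRelations.exists_eq_prod hseg hα

/-- A nonzero vector in `(ℂ^N)^{⊗ m}` with coefficients `α` is fully separable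
iff the Segre relations hold for every slot `j`. -/
theorem multipartite_separable_iff_segre (N m : ℕ) (hN : 1 ≤ N) (hm : 1 ≤ m)
    (α : (Fin m → Fin N) → ℂ) (hα : α ≠ 0) :
    (∃ v : Fin m → Fin N → ℂ, ∀ k : Fin m → Fin N, α k = ∏ j, v j (k j)) ↔
      (∀ (j : Fin m) (k l : Fin m → Fin N),
        α k * α l =
          α (Function.update k j (l j)) * α (Function.update l j (k j))) :=
  multipartite_separable_iff_segre_general N m hm α hα
end

section
/- Let α : Fin N × Fin N → ℂ and let R be the N²×N² matrix whose (1,1) entry is α_{11}, whose (N²,N²) entry is α_{NN}, and whose remaining nonzero entries are the anti-diagonal entries given by the remaining coefficients α_{kl} in reverse lexicographic order. If α satisfies α_{k1 k2} α_{l1 l2} ≠ α_{k1 l2} α_{l1 k2} for some indices, then R((Σ_k e_k) ⊗ (Σ_l e_l)) = Σ_{k,l} α_{kl} e_k ⊗ e_l is an entangled (non-product) state. -/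
/-!
Every row of `R` has a single nonzero entry `α p`, so `R` sends the all-ones vector to `α`.
A product state `u ⊗ v` has all `2 × 2` minors `ψ(k₁,k₂) ψ(l₁,l₂) - ψ(k₁,l₂) ψ(l₁,k₂)` equal
to zero, and the hypothesis provides a nonzero one.
-/

theorem Matrix.mulVec_const_one_of_row_eq_single {m n R : Type*} [Fintype n] [DecidableEq n]
    [NonAssocSemiring R] (A : Matrix m n R) (σ : m → n) (a : m → R)
    (hA : ∀ p, A p = Pi.single (σ p) (a p)) :
    A.mulVec (fun _ => 1) = a := by
  funext p
  simp [Matrix.mulVec, dotProduct, hA]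

def IsProductState {ι κ R : Type*} [Mul R] (ψ : ι × κ → R) : Prop :=
  ∃ u : ι → R, ∃ v : κ → R, ∀ k l, ψ (k, l) = u k * v l

theorem IsProductState.mul_eq_mul_swap {ι κ R : Type*} [CommMonoid R] {ψ : ι × κ → R}
    (hψ : IsProductState ψ) (k₁ l₁ : ι) (k₂ l₂ : κ) :
    ψ (k₁, k₂) * ψ (l₁, l₂) = ψ (k₁, l₂) * ψ (l₁, k₂) := by
  obtain ⟨u, v, huv⟩ := hψ
  rw [huv, huv, huv, huv]
  ac_rfl

def gateMatrix (N : ℕ) (α : Fin N × Fin N → ℂ) : Matrix (Fin N × Fin N) (Fin N × Fin N) ℂ :=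
  fun p q =>
    if (p.1.val = 0 ∧ p.2.val = 0) ∨ (p.1.val = N - 1 ∧ p.2.val = N - 1) then
      (if q = p then α p else 0)
    else
      (if q.1.val = N - 1 - p.1.val ∧ q.2.val = N - 1 - p.2.val then α p
       else 0)

theorem gateMatrix_row_eq_single {N : ℕ} (α : Fin N × Fin N → ℂ) (p : Fin N × Fin N) :
    gateMatrix N α p =
      Pi.single
        (if (p.1.val = 0 ∧ p.2.val = 0) ∨ (p.1.val = N - 1 ∧ p.2.val = N - 1) then p
         else (p.1.rev, p.2.rev))
        (α p) := by
  funext q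
  have hrev : (q.1.val = N - 1 - p.1.val ∧ q.2.val = N - 1 - p.2.val) ↔
      q = (p.1.rev, p.2.rev) := by
    simp only [Prod.ext_iff, Fin.ext_iff, Fin.val_rev]
    omega
  unfold gateMatrix
  split_ifs <;> simp_all

theorem gateMatrix_mulVec_const_one (N : ℕ) (α : Fin N × Fin N → ℂ) :
    (gateMatrix N α).mulVec (fun _ => 1) = α :=
  Matrix.mulVec_const_one_of_row_eq_single _ _ α (gateMatrix_row_eq_single α)

theorem gate_entangler_produces_entangled_state_general (N : ℕ)
    (α : Fin N × Fin N → ℂ)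
    (R : Matrix (Fin N × Fin N) (Fin N × Fin N) ℂ)
    (hR : R = fun p q =>
      if (p.1.val = 0 ∧ p.2.val = 0) ∨ (p.1.val = N - 1 ∧ p.2.val = N - 1) then
        (if q = p then α p else 0)
      else
        (if q.1.val = N - 1 - p.1.val ∧ q.2.val = N - 1 - p.2.val then α p
         else 0))
    (h : ∃ k1 k2 l1 l2 : Fin N,
      α (k1, k2) * α (l1, l2) ≠ α (k1, l2) * α (l1, k2)) :
    R.mulVec (fun _ : Fin N × Fin N => 1) = (fun p => α p) ∧
      ¬ ∃ u v : Fin N → ℂ, ∀ k l : Fin N,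
          R.mulVec (fun _ : Fin N × Fin N => 1) (k, l) = u k * v l := by
  obtain rfl : R = gateMatrix N α := hR
  have hmulVec := gateMatrix_mulVec_const_one N α
  refine ⟨hmulVec, fun hprod => ?_⟩
  obtain ⟨k₁, k₂, l₁, l₂, hminor⟩ := h
  rw [hmulVec] at hprod
  exact hminor (IsProductState.mul_eq_mul_swap hprod k₁ l₁ k₂ l₂)

/-- The `N²×N²` gate `R = R^d + R^{ad}` (with `α₁₁`, `α_{NN}` in the corners of
the diagonal and the remaining coefficients on the anti-diagonal, arranged so
that `R` maps the uniform product vector to `Σ α_{kl} e_k ⊗ e_l`) produces an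
entangled (non-product) state whenever some Segre relation fails. -/
theorem gate_entangler_produces_entangled_state (N : ℕ) (hN : 1 ≤ N)
    (α : Fin N × Fin N → ℂ)
    (R : Matrix (Fin N × Fin N) (Fin N × Fin N) ℂ)
    (hR : R = fun p q =>
      if (p.1.val = 0 ∧ p.2.val = 0) ∨ (p.1.val = N - 1 ∧ p.2.val = N - 1) then
        (if q = p then α p else 0)
      else
        (if q.1.val = N - 1 - p.1.val ∧ q.2.val = N - 1 - p.2.val then α p
         else 0))
    (h : ∃ k1 k2 l1 l2 : Fin N,
      α (k1, k2) * α (l1, l2) ≠ α (k1, l2) * α (l1, k2)) :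
    R.mulVec (fun _ : Fin N × Fin N => 1) = (fun p => α p) ∧
      ¬ ∃ u v : Fin N → ℂ, ∀ k l : Fin N,
          R.mulVec (fun _ : Fin N × Fin N => 1) (k, l) = u k * v l :=
  gate_entangler_produces_entangled_state_general N α R hR h
end
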